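/- arXiv:1606.07032 — 2 statements merged into one kernel-verified Lean document; each statement's English description precedes it below -/
import Mathlib

section
/- Let C be a Picard category with unit e and symmetry β. Fix an object x, an inverse x*, and an isomorphism u : e ≅ x ⊗ x*. Then the automorphism σ(x) of e given by e ≅ (x ⊗ x) ⊗ (x* ⊗ x*) → (x ⊗ x) ⊗ (x* ⊗ x*) ≅ e, where the middle map is β_{x,x} ⊗ id_{x*⊗x*} and the outer isomorphisms are built from u and its inverse (and associators), is independent of the choice of x*, of u, and of the representative in the isomorphism class of x. -/
/-!
STATEMENT 6: In a Picard category, the signature σ(x) of an object x — the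
automorphism of the unit e obtained by conjugating β_{x,x} ▷ (x* ⊗ x*) by the
isomorphism e ≅ (x ⊗ x) ⊗ (x* ⊗ x*) built from u : e ≅ x ⊗ x* and
associators/unitors — is independent of the choice of inverse x*, of the
isomorphism u, and of the representative in the isomorphism class of x.
-/

open CategoryTheory MonoidalCategory

universe v u

variable {C : Type u} [Category.{v} C] [MonoidalCategory C] [SymmetricCategory C]

/-- The canonical isomorphism `e ≅ (x ⊗ x) ⊗ (x* ⊗ x*)` built from
`u : e ≅ x ⊗ x*`, unitors and associators. -/
def sigConj (x x' : C) (u : 𝟙_ C ≅ x ⊗ x') : 𝟙_ C ≅ (x ⊗ x) ⊗ (x' ⊗ x') :=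
  u ≪≫ whiskerLeftIso x ((λ_ x').symm ≪≫ whiskerRightIso u x' ≪≫ α_ x x' x')
    ≪≫ (α_ x x (x' ⊗ x')).symm

/-- The signature of `x` computed from the inverse data `(x', u)`:
the automorphism of the unit obtained by conjugating `β_{x,x} ▷ (x' ⊗ x')`. -/
def sig (x x' : C) (u : 𝟙_ C ≅ x ⊗ x') : 𝟙_ C ⟶ 𝟙_ C :=
  (sigConj x x' u).hom ≫ ((β_ x x).hom ▷ (x' ⊗ x')) ≫ (sigConj x x' u).inv

/-!
Endomorphisms of the unit commute (Eckmann–Hilton), so conjugating an endomorphism of `z` by an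
isomorphism `𝟙_ ≅ z` does not depend on that isomorphism. An isomorphism `p : x ≅ y` induces an
isomorphism `q : x' ≅ y'` between the chosen inverses, and by naturality of the braiding
`(p ⊗ p) ⊗ (q ⊗ q)` intertwines `β_{x,x} ▷ (x' ⊗ x')` with `β_{y,y} ▷ (y' ⊗ y')`.
-/

section

variable {D : Type*} [Category D] [MonoidalCategory D]

lemma unit_endo_comp_comm (f g : 𝟙_ D ⟶ 𝟙_ D) : f ≫ g = g ≫ f := by
  have hfg : f ≫ g = (ρ_ (𝟙_ D)).inv ≫ (f ▷ 𝟙_ D ≫ 𝟙_ D ◁ g) ≫ (λ_ (𝟙_ D)).hom := by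
    simp [unitors_equal, unitors_inv_equal]
  have hgf : g ≫ f = (ρ_ (𝟙_ D)).inv ≫ (𝟙_ D ◁ g ≫ f ▷ 𝟙_ D) ≫ (λ_ (𝟙_ D)).hom := by
    simp [unitors_equal, unitors_inv_equal]
  rw [hfg, hgf, whisker_exchange]

lemma conj_eq_conj_of_unit_iso {z : D} (ψ χ : 𝟙_ D ≅ z) (h : z ⟶ z) :
    ψ.hom ≫ h ≫ ψ.inv = χ.hom ≫ h ≫ χ.inv := by
  calc ψ.hom ≫ h ≫ ψ.inv
      = (ψ.hom ≫ χ.inv) ≫ (χ.hom ≫ h ≫ χ.inv) ≫ (χ.hom ≫ ψ.inv) := by simp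
    _ = (χ.hom ≫ h ≫ χ.inv) ≫ (ψ.hom ≫ χ.inv) ≫ (χ.hom ≫ ψ.inv) := by
      rw [← Category.assoc, unit_endo_comp_comm (ψ.hom ≫ χ.inv), Category.assoc]
    _ = χ.hom ≫ h ≫ χ.inv := by simp

lemma conj_eq_conj_of_unit_iso_of_comm {z w : D} (ψ : 𝟙_ D ≅ z) (χ : 𝟙_ D ≅ w) (φ : z ≅ w)
    {h : z ⟶ z} {k : w ⟶ w} (hk : h ≫ φ.hom = φ.hom ≫ k) :
    ψ.hom ≫ h ≫ ψ.inv = χ.hom ≫ k ≫ χ.inv := by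
  rw [← conj_eq_conj_of_unit_iso (ψ ≪≫ φ), Iso.trans_hom, Iso.trans_inv, Category.assoc,
    ← reassoc_of% hk, Iso.hom_inv_id_assoc]

variable [BraidedCategory D]

def inverseIsoOfIso {x y x' y' : D} (u : 𝟙_ D ≅ x ⊗ x') (v : 𝟙_ D ≅ y ⊗ y') (p : x ≅ y) :
    x' ≅ y' :=
  (λ_ x').symm ≪≫ whiskerRightIso (v ≪≫ β_ y y') x' ≪≫ α_ y' y x'
    ≪≫ whiskerLeftIso y' (whiskerRightIso p.symm x' ≪≫ u.symm) ≪≫ ρ_ y'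

lemma braiding_whiskerRight_comp_tensor_hom {x y x' y' : D} (p : x ≅ y) (q : x' ≅ y') :
    (β_ x x).hom ▷ (x' ⊗ x') ≫ ((p.hom ⊗ₘ p.hom) ⊗ₘ (q.hom ⊗ₘ q.hom))
      = ((p.hom ⊗ₘ p.hom) ⊗ₘ (q.hom ⊗ₘ q.hom)) ≫ (β_ y y).hom ▷ (y' ⊗ y') := by
  rw [MonoidalCategory.tensorHom_def, ← comp_whiskerRight_assoc,
    ← BraidedCategory.braiding_naturality, comp_whiskerRight_assoc, Category.assoc,
    ← whisker_exchange]

end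

theorem signature_well_defined_general
    (x y x' y' : C) (u : 𝟙_ C ≅ x ⊗ x') (v : 𝟙_ C ≅ y ⊗ y') (p : x ≅ y) :
    sig x x' u = sig y y' v := by
  let q := inverseIsoOfIso u v p
  exact conj_eq_conj_of_unit_iso_of_comm (sigConj x x' u) (sigConj y y' v)
    (tensorIso (tensorIso p p) (tensorIso q q)) (braiding_whiskerRight_comp_tensor_hom p q)

theorem signature_well_defined
    (hgpd : ∀ {a b : C} (f : a ⟶ b), IsIso f)
    (hinv : ∀ x : C, ∃ y : C,
      Nonempty (x ⊗ y ≅ 𝟙_ C) ∧ Nonempty (y ⊗ x ≅ 𝟙_ C))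
    (x y x' y' : C) (u : 𝟙_ C ≅ x ⊗ x') (v : 𝟙_ C ≅ y ⊗ y') (p : x ≅ y) :
    sig x x' u = sig y y' v :=
  signature_well_defined_general x y x' y' u v p
end

section
/- Let C be a Picard category with unit e and symmetry β. The signature map k₀ : π₀C → Aut(e), sending the class of x to the signature σ(x) conjugated from β_{x,x} ⊗ id_{x*⊗x*} as above, is a group homomorphism whose image consists of 2-torsion elements: k₀([x])² = id_e for every object x. -/
/-!
An endomorphism `s` of the unit acts on every object `a` by `λ ∘ (s ▷ a) ∘ λ⁻¹`, naturally in `a`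
and compatibly with the tensor product on either side, and the action is faithful on any object
with a tensor inverse. The signature `σ(x)` is the scalar acting on `x ⊗ x` as `β_{x,x}`. Under
the middle-four interchange `tensorμ`, `β_{x⊗y,x⊗y}` corresponds to `β_{x,x} ⊗ β_{y,y}`, which is
how `σ(x)σ(y)` acts, so `σ(x ⊗ y) = σ(x)σ(y)`; and `σ(x)² = id` because `β_{x,x}² = id`.
-/

open CategoryTheory MonoidalCategory

universe v u

variable {C : Type u} [Category.{v} C] [MonoidalCategory C] [SymmetricCategory C]

/-- The inverse data for `x ⊗ y` induced by inverse data for `x` and `y`: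
the canonical isomorphism `e ≅ (x ⊗ y) ⊗ (y' ⊗ x')`. -/
def prodInvIso (x y x' y' : C) (u : 𝟙_ C ≅ x ⊗ x') (v : 𝟙_ C ≅ y ⊗ y') :
    𝟙_ C ≅ (x ⊗ y) ⊗ (y' ⊗ x') :=
  u ≪≫ whiskerLeftIso x ((λ_ x').symm ≪≫ whiskerRightIso v x' ≪≫ α_ y y' x')
    ≪≫ (α_ x y (y' ⊗ x')).symm

section Monoidal

variable {D : Type*} [Category D] [MonoidalCategory D]

def unitEndAction (s : 𝟙_ D ⟶ 𝟙_ D) (a : D) : a ⟶ a :=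
  (λ_ a).inv ≫ s ▷ a ≫ (λ_ a).hom

lemma unitEndAction_naturality (s : 𝟙_ D ⟶ 𝟙_ D) {a a' : D} (f : a ⟶ a') :
    unitEndAction s a ≫ f = f ≫ unitEndAction s a' := by
  simp only [unitEndAction, Category.assoc]
  rw [← leftUnitor_naturality, ← whisker_exchange_assoc, leftUnitor_inv_naturality_assoc]

lemma unitEndAction_tensorUnit (s : 𝟙_ D ⟶ 𝟙_ D) : unitEndAction s (𝟙_ D) = s := by
  simp [unitEndAction, unitors_equal, unitors_inv_equal]

lemma unitEndAction_comp (s t : 𝟙_ D ⟶ 𝟙_ D) (a : D) :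
    unitEndAction (s ≫ t) a = unitEndAction s a ≫ unitEndAction t a := by
  simp [unitEndAction]

lemma unitEndAction_tensor_eq_whiskerRight (s : 𝟙_ D ⟶ 𝟙_ D) (a c : D) :
    unitEndAction s (a ⊗ c) = unitEndAction s a ▷ c := by
  simp only [unitEndAction]
  monoidal

lemma unitEndAction_eq_conj (s : 𝟙_ D ⟶ 𝟙_ D) {a b : D} (k : a ≅ b) :
    unitEndAction s a = k.hom ≫ unitEndAction s b ≫ k.inv := by
  rw [← Category.assoc, ← unitEndAction_naturality, Category.assoc, Iso.hom_inv_id,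
    Category.comp_id]

lemma eq_conj_unitEndAction_whiskerRight (s : 𝟙_ D ⟶ 𝟙_ D) {a b : D} (w : 𝟙_ D ≅ a ⊗ b) :
    s = w.hom ≫ unitEndAction s a ▷ b ≫ w.inv := by
  rw [← unitEndAction_tensor_eq_whiskerRight, ← unitEndAction_eq_conj, unitEndAction_tensorUnit]

lemma unitEndAction_injective {a b : D} (w : 𝟙_ D ≅ a ⊗ b) :
    Function.Injective (fun s => unitEndAction s a) := by
  intro s t h
  rw [eq_conj_unitEndAction_whiskerRight s w, eq_conj_unitEndAction_whiskerRight t w]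
  exact congrArg (fun f => w.hom ≫ f ▷ b ≫ w.inv) h

lemma eq_of_whiskerRight_eq {a a' b z : D} (j : b ⊗ z ≅ 𝟙_ D) {f g : a ⟶ a'}
    (h : f ▷ b = g ▷ b) : f = g := by
  have htensor : f ▷ (b ⊗ z) = g ▷ (b ⊗ z) := by
    rw [whiskerRight_tensor, whiskerRight_tensor, h]
  have hunit : a ◁ j.hom ≫ f ▷ 𝟙_ D = a ◁ j.hom ≫ g ▷ 𝟙_ D := by
    rw [whisker_exchange, whisker_exchange, htensor]
  simpa using (cancel_epi (a ◁ j.hom)).1 hunit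

end Monoidal

section Braided

variable {D : Type*} [Category D] [MonoidalCategory D] [BraidedCategory D]

lemma unitEndAction_eq_rightUnitor_conj (s : 𝟙_ D ⟶ 𝟙_ D) (a : D) :
    unitEndAction s a = (ρ_ a).inv ≫ a ◁ s ≫ (ρ_ a).hom := by
  have h := BraidedCategory.braiding_naturality_right a (Y := 𝟙_ D) (Z := 𝟙_ D) s
  rw [braiding_tensorUnit_right] at h
  simp only [unitEndAction]
  rw [← cancel_epi (ρ_ a).hom, ← reassoc_of% h]
  simp

lemma unitEndAction_tensor_eq_whiskerLeft (s : 𝟙_ D ⟶ 𝟙_ D) (a c : D) :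
    unitEndAction s (a ⊗ c) = a ◁ unitEndAction s c := by
  rw [unitEndAction_eq_rightUnitor_conj, unitEndAction_eq_rightUnitor_conj]
  monoidal

lemma unitEndAction_conj_whiskerRight {a b : D} (w : 𝟙_ D ≅ a ⊗ b) (f : a ⟶ a) :
    unitEndAction (w.hom ≫ f ▷ b ≫ w.inv) a = f := by
  apply eq_of_whiskerRight_eq (β_ b a ≪≫ w.symm)
  rw [← unitEndAction_tensor_eq_whiskerRight, ← cancel_epi w.hom,
    ← unitEndAction_naturality, unitEndAction_tensorUnit]
  simp

lemma unitEndAction_comp_eq_tensorHom (s t : 𝟙_ D ⟶ 𝟙_ D) (a b : D) :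
    unitEndAction (s ≫ t) (a ⊗ b) = unitEndAction s a ⊗ₘ unitEndAction t b := by
  rw [unitEndAction_comp, unitEndAction_tensor_eq_whiskerRight,
    unitEndAction_tensor_eq_whiskerLeft, ← MonoidalCategory.tensorHom_def]

end Braided

variable {x y x' y' : C}

lemma unitEndAction_sig (u : 𝟙_ C ≅ x ⊗ x') :
    unitEndAction (sig x x' u) (x ⊗ x) = (β_ x x).hom :=
  unitEndAction_conj_whiskerRight (sigConj x x' u) (β_ x x).hom

lemma sig_tensor (u : 𝟙_ C ≅ x ⊗ x') (v : 𝟙_ C ≅ y ⊗ y') :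
    sig (x ⊗ y) (y' ⊗ x') (prodInvIso x y x' y' u v) = sig x x' u ≫ sig y y' v := by
  apply unitEndAction_injective (sigConj (x ⊗ y) (y' ⊗ x') (prodInvIso x y x' y' u v))
  have hμ : tensorμ x x y y ≫ unitEndAction (sig x x' u ≫ sig y y' v) ((x ⊗ y) ⊗ (x ⊗ y)) =
      tensorμ x x y y ≫ (β_ (x ⊗ y) (x ⊗ y)).hom := by
    rw [← unitEndAction_naturality, unitEndAction_comp_eq_tensorHom, unitEndAction_sig,
      unitEndAction_sig, SymmetricCategory.tensorμ_braid_swap]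
  have h := congrArg (tensorδ x x y y ≫ ·) hμ
  simp only [tensorδ_tensorμ_assoc] at h
  exact (unitEndAction_sig _).trans h.symm

lemma sig_comp_self (u : 𝟙_ C ≅ x ⊗ x') : sig x x' u ≫ sig x x' u = 𝟙 (𝟙_ C) := by
  simp only [sig, Category.assoc, Iso.inv_hom_id_assoc]
  rw [← comp_whiskerRight_assoc, SymmetricCategory.symmetry]
  simp

theorem signature_is_two_torsion_homomorphism_general
    (x y x' y' : C) (u : 𝟙_ C ≅ x ⊗ x') (v : 𝟙_ C ≅ y ⊗ y') :
    sig (x ⊗ y) (y' ⊗ x') (prodInvIso x y x' y' u v) = sig x x' u ≫ sig y y' v ∧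
      sig x x' u ≫ sig x x' u = 𝟙 (𝟙_ C) :=
  ⟨sig_tensor u v, sig_comp_self u⟩

theorem signature_is_two_torsion_homomorphism
    (hgpd : ∀ {a b : C} (f : a ⟶ b), IsIso f)
    (hinv : ∀ x : C, ∃ y : C,
      Nonempty (x ⊗ y ≅ 𝟙_ C) ∧ Nonempty (y ⊗ x ≅ 𝟙_ C))
    (x y x' y' : C) (u : 𝟙_ C ≅ x ⊗ x') (v : 𝟙_ C ≅ y ⊗ y') :
    sig (x ⊗ y) (y' ⊗ x') (prodInvIso x y x' y' u v) = sig x x' u ≫ sig y y' v ∧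
      sig x x' u ≫ sig x x' u = 𝟙 (𝟙_ C) :=
  signature_is_two_torsion_homomorphism_general x y x' y' u v
end
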